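/- arXiv:0801.3929 — 2 statements merged into one kernel-verified Lean document; each statement's English description precedes it below -/
import Mathlib

section
/- Let L be a Lie-Rinehart algebra over R and p a prime ideal of R. Then the localization L_p = R_p ⊗_R L carries a Lie bracket given by [s⁻¹X, t⁻¹Y] = (st)⁻¹[X,Y] − s⁻¹t⁻²X(t)·Y + t⁻¹s⁻²Y(s)·X (for s, t ∈ R ∖ p, X, Y ∈ L), which is k-bilinear and satisfies the Jacobi identity. -/
open scoped TensorProduct

section LR
variable (k R L : Type*)
variable [CommRing k] [CommRing R] [Algebra k R]
variable [LieRing L] [LieAlgebra k L] [Module R L]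

structure LieRinehartStr where
  ρ : L →ₗ[R] Derivation k R R
  map_lie : ∀ X Y : L, ρ ⁅X, Y⁆ = ⁅ρ X, ρ Y⁆
  leibniz : ∀ (r : R) (X Y : L), ⁅X, r • Y⁆ = r • ⁅X, Y⁆ + (ρ X r) • Y

variable (h : LieRinehartStr k R L)

end LR

/-! The bracket is first built on `LocalizedModule S L` for an arbitrary submonoid `S` and then
transported to `S⁻¹R ⊗[R] L` along `LocalizedModule.equivTensorProduct`. Applying the Leibniz
rule in both arguments forces `[X/s, Y/t] = (st[X,Y] - s X(t) Y + t Y(s) X) / (s²t²)` on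
representatives. Once denominators are cleared, independence of the representatives,
biadditivity, `k`-linearity and the Jacobi identity become identities in `L`, which follow from the
Leibniz rule, antisymmetry, the Jacobi identity of `L` and the fact that `ρ` preserves brackets. -/

set_option linter.unusedSectionVars false

namespace LieRinehartStr

variable {k R L : Type*} [CommRing k] [CommRing R] [Algebra k R]
  [LieRing L] [LieAlgebra k L] [Module R L] (h : LieRinehartStr k R L)

lemma smul_lie (r : R) (X Y : L) : ⁅r • X, Y⁆ = r • ⁅X, Y⁆ - h.ρ Y r • X := by
  rw [← lie_skew, h.leibniz, ← lie_skew X Y]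
  module

/-- `[X/s, Y/t]` written over the common denominator `s²t²`. -/
def bracketNum (X : L) (s : R) (Y : L) (t : R) : L :=
  (s * t) • ⁅X, Y⁆ - (s * h.ρ X t) • Y + (t * h.ρ Y s) • X

lemma bracketNum_swap (X : L) (s : R) (Y : L) (t : R) :
    h.bracketNum Y t X s = -h.bracketNum X s Y t := by
  rw [bracketNum, bracketNum, ← lie_skew]
  module

lemma bracketNum_self (X : L) (s : R) : h.bracketNum X s X s = 0 := by
  rw [bracketNum, lie_self]
  module

variable {S : Submonoid R}

def locBracketAux (a b : L × S) : LocalizedModule S L :=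
  LocalizedModule.mk (h.bracketNum a.1 a.2 b.1 b.2) (a.2 * a.2 * (b.2 * b.2))

lemma locBracketAux_swap (a b : L × S) : h.locBracketAux b a = -h.locBracketAux a b := by
  rw [locBracketAux, locBracketAux, h.bracketNum_swap, LocalizedModule.mk_neg,
    mul_comm (b.2 * b.2)]

lemma locBracketAux_congr_left {a a' : L × S} (haa' : a ≈ a') (b : L × S) :
    h.locBracketAux a b = h.locBracketAux a' b := by
  obtain ⟨X, s⟩ := a; obtain ⟨X', s'⟩ := a'; obtain ⟨Y, t⟩ := b
  obtain ⟨u, hu⟩ := haa'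
  simp only [Submonoid.smul_def, smul_smul] at hu
  have hρ : ((u : R) * s' * h.ρ X t) • Y = ((u : R) * s * h.ρ X' t) • Y := by
    have := congrArg (fun W => h.ρ W t) hu
    simp only [map_smul, Derivation.smul_apply, smul_eq_mul] at this
    rw [this]
  have hlie := congrArg (⁅·, Y⁆) hu
  simp only [h.smul_lie, Derivation.leibniz, smul_eq_mul] at hlie
  rw [locBracketAux, locBracketAux, LocalizedModule.mk_eq]
  refine ⟨u * u, ?_⟩
  simp only [bracketNum, Submonoid.smul_def, Submonoid.coe_mul, smul_smul]
  linear_combination (norm := module)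
    ((u : R) * s * s' * t * t * t) • hlie - ((u : R) * s * s' * t * t) • hρ
      + ((t : R) * t * t * s * s' * h.ρ Y u
          + (u : R) * t * t * t * (s * h.ρ Y s' + s' * h.ρ Y s)) • hu

lemma locBracketAux_congr {a b a' b' : L × S} (haa' : a ≈ a') (hbb' : b ≈ b') :
    h.locBracketAux a b = h.locBracketAux a' b' := by
  rw [h.locBracketAux_congr_left haa', ← neg_neg (h.locBracketAux a' b), ← h.locBracketAux_swap,
    h.locBracketAux_congr_left hbb', h.locBracketAux_swap, neg_neg]

noncomputable def locBracket (x y : LocalizedModule S L) : LocalizedModule S L :=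
  LocalizedModule.liftOn₂ x y h.locBracketAux fun _ _ _ _ => h.locBracketAux_congr

lemma locBracket_mk (X Y : L) (s t : S) :
    h.locBracket (.mk X s) (.mk Y t) = .mk (h.bracketNum X s Y t) (s * s * (t * t)) :=
  LocalizedModule.liftOn₂_mk _ _ _ _ _ _

lemma locBracket_skew (x y : LocalizedModule S L) : -h.locBracket y x = h.locBracket x y := by
  induction x with | _ X s => ?_
  induction y with | _ Y t => ?_
  rw [locBracket_mk, locBracket_mk, h.bracketNum_swap, LocalizedModule.mk_neg, neg_neg,
    mul_comm (t * t)]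

lemma locBracket_self (x : LocalizedModule S L) : h.locBracket x x = 0 := by
  induction x with | _ X s => ?_
  rw [locBracket_mk, bracketNum_self, LocalizedModule.zero_mk]

lemma locBracket_add_left (x y z : LocalizedModule S L) :
    h.locBracket (x + y) z = h.locBracket x z + h.locBracket y z := by
  induction x with | _ X s => ?_
  induction y with | _ Y t => ?_
  induction z with | _ Z u => ?_
  rw [LocalizedModule.mk_add_mk, locBracket_mk, locBracket_mk, locBracket_mk,
    LocalizedModule.mk_add_mk, LocalizedModule.mk_eq]
  refine ⟨1, ?_⟩
  simp only [bracketNum, Submonoid.smul_def, Submonoid.coe_mul, one_smul, add_lie, h.smul_lie,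
    map_add, map_smul, Derivation.add_apply, Derivation.smul_apply, smul_eq_mul, Derivation.leibniz]
  module

lemma locBracket_add_right (x y z : LocalizedModule S L) :
    h.locBracket x (y + z) = h.locBracket x y + h.locBracket x z := by
  rw [← h.locBracket_skew, locBracket_add_left, neg_add, h.locBracket_skew, h.locBracket_skew]

lemma locBracket_smul_left {r : R} (hr : ∀ W : L, h.ρ W r = 0) (x y : LocalizedModule S L) :
    h.locBracket (r • x) y = r • h.locBracket x y := by
  induction x with | _ X s => ?_
  induction y with | _ Y t => ?_
  rw [LocalizedModule.smul'_mk, locBracket_mk, locBracket_mk, LocalizedModule.smul'_mk]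
  congr 1
  simp only [bracketNum, h.smul_lie, map_smul, Derivation.smul_apply, smul_eq_mul, hr]
  module

lemma locBracket_smul_right {r : R} (hr : ∀ W : L, h.ρ W r = 0) (x y : LocalizedModule S L) :
    h.locBracket x (r • y) = r • h.locBracket x y := by
  rw [← h.locBracket_skew, h.locBracket_smul_left hr, ← smul_neg, h.locBracket_skew]

lemma locBracket_jacobi (x y z : LocalizedModule S L) :
    h.locBracket x (h.locBracket y z) + h.locBracket y (h.locBracket z x)
      + h.locBracket z (h.locBracket x y) = 0 := by
  induction x with | _ X s => ?_
  induction y with | _ Y t => ?_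
  induction z with | _ Z u => ?_
  rw [locBracket_mk h Y Z t u, locBracket_mk h Z X u s, locBracket_mk h X Y s t, locBracket_mk,
    locBracket_mk, locBracket_mk, LocalizedModule.mk_add_mk, LocalizedModule.mk_add_mk,
    ← LocalizedModule.zero_mk (1 : S), LocalizedModule.mk_eq]
  refine ⟨1, ?_⟩
  have hYX : ⁅Y, X⁆ = -⁅X, Y⁆ := by rw [← lie_skew]
  have hZY : ⁅Z, Y⁆ = -⁅Y, Z⁆ := by rw [← lie_skew]
  have hZX : ⁅Z, X⁆ = -⁅X, Z⁆ := by rw [← lie_skew]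
  have jacobi : ⁅Z, ⁅X, Y⁆⁆ = ⁅Y, ⁅X, Z⁆⁆ - ⁅X, ⁅Y, Z⁆⁆ := by
    rw [← lie_skew Z ⁅X, Y⁆, lie_lie]
    abel
  simp only [bracketNum, Submonoid.smul_def, Submonoid.coe_mul, one_smul, smul_smul, smul_zero,
    lie_add, lie_sub, h.leibniz, h.map_lie, Derivation.commutator_apply, map_add, map_sub,
    map_smul, Derivation.add_apply, Derivation.sub_apply, Derivation.smul_apply,
    Derivation.leibniz, smul_eq_mul, map_neg, Derivation.neg_apply, smul_add, smul_sub, add_smul,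
    hYX, hZY, hZX, jacobi, lie_neg, smul_neg]
  module

lemma locBracket_mk_mk (X Y : L) (s t : S) :
    h.locBracket (.mk X s) (.mk Y t) = .mk ⁅X, Y⁆ (s * t) - .mk (h.ρ X t • Y) (s * t * t)
      + .mk (h.ρ Y s • X) (t * s * s) := by
  rw [locBracket_mk, sub_eq_add_neg, ← LocalizedModule.mk_neg, LocalizedModule.mk_add_mk,
    LocalizedModule.mk_add_mk, LocalizedModule.mk_eq]
  refine ⟨1, ?_⟩
  simp only [bracketNum, Submonoid.smul_def, Submonoid.coe_mul, one_smul, smul_smul, smul_neg]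
  module

end LieRinehartStr

theorem stmt2_general (k R L : Type*) [Field k] [CommRing R] [Algebra k R]
    [LieRing L] [LieAlgebra k L] [Module R L] (h : LieRinehartStr k R L)
    (p : Ideal R) [p.IsPrime] :
    ∃ b : (Localization.AtPrime p ⊗[R] L) → (Localization.AtPrime p ⊗[R] L) →
        (Localization.AtPrime p ⊗[R] L),
      (∀ x y z, b (x + y) z = b x z + b y z) ∧
      (∀ x y z, b x (y + z) = b x y + b x z) ∧
      (∀ (c : k) x y, b ((algebraMap k R c) • x) y = (algebraMap k R c) • b x y) ∧
      (∀ (c : k) x y, b x ((algebraMap k R c) • y) = (algebraMap k R c) • b x y) ∧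
      (∀ x, b x x = 0) ∧
      (∀ x y z, b x (b y z) + b y (b z x) + b z (b x y) = 0) ∧
      (∀ (s t : p.primeCompl) (X Y : L),
        b (Localization.mk 1 s ⊗ₜ[R] X) (Localization.mk 1 t ⊗ₜ[R] Y) =
          Localization.mk 1 (s * t) ⊗ₜ[R] ⁅X, Y⁆
            - Localization.mk 1 (s * t * t) ⊗ₜ[R] ((h.ρ X (t : R)) • Y)
            + Localization.mk 1 (t * s * s) ⊗ₜ[R] ((h.ρ Y (s : R)) • X)) := by
  let e := (LocalizedModule.equivTensorProduct p.primeCompl L).restrictScalars R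
  have hc (c : k) (W : L) : h.ρ W (algebraMap k R c) = 0 := (h.ρ W).map_algebraMap c
  refine ⟨fun x y => e (h.locBracket (e.symm x) (e.symm y)), ?_, ?_, ?_, ?_, ?_, ?_, ?_⟩
  · intro x y z
    simp only [map_add, h.locBracket_add_left]
  · intro x y z
    simp only [map_add, h.locBracket_add_right]
  · intro c x y
    simp only [map_smul, h.locBracket_smul_left (hc c)]
  · intro c x y
    simp only [map_smul, h.locBracket_smul_right (hc c)]
  · intro x
    simp only [h.locBracket_self, map_zero]
  · intro x y z
    simp only [LinearEquiv.symm_apply_apply, ← map_add, h.locBracket_jacobi, map_zero]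
  · intro s t X Y
    have he (W : L) (u : p.primeCompl) : e (.mk W u) = Localization.mk 1 u ⊗ₜ W :=
      LocalizedModule.equivTensorProduct_apply_mk _ W u
    dsimp only
    rw [← he, ← he, e.symm_apply_apply, e.symm_apply_apply, h.locBracket_mk_mk, map_add,
      map_sub, he, he, he]

/-- For a Lie-Rinehart algebra `L` over `R` and a prime ideal `p` of `R`,
the localization `L_p = R_p ⊗_R L` carries a Lie bracket, `k`-bilinear, alternating
and satisfying the Jacobi identity, given on generators by
`[s⁻¹X, t⁻¹Y] = (st)⁻¹[X,Y] − s⁻¹t⁻²X(t)·Y + t⁻¹s⁻²Y(s)·X`. -/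
theorem stmt2 (k R L : Type*) [Field k] [CharZero k] [CommRing R] [Algebra k R]
    [LieRing L] [LieAlgebra k L] [Module R L] (h : LieRinehartStr k R L)
    (p : Ideal R) [p.IsPrime] :
    ∃ b : (Localization.AtPrime p ⊗[R] L) → (Localization.AtPrime p ⊗[R] L) →
        (Localization.AtPrime p ⊗[R] L),
      (∀ x y z, b (x + y) z = b x z + b y z) ∧
      (∀ x y z, b x (y + z) = b x y + b x z) ∧
      (∀ (c : k) x y, b ((algebraMap k R c) • x) y = (algebraMap k R c) • b x y) ∧
      (∀ (c : k) x y, b x ((algebraMap k R c) • y) = (algebraMap k R c) • b x y) ∧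
      (∀ x, b x x = 0) ∧
      (∀ x y z, b x (b y z) + b y (b z x) + b z (b x y) = 0) ∧
      (∀ (s t : p.primeCompl) (X Y : L),
        b (Localization.mk 1 s ⊗ₜ[R] X) (Localization.mk 1 t ⊗ₜ[R] Y) =
          Localization.mk 1 (s * t) ⊗ₜ[R] ⁅X, Y⁆
            - Localization.mk 1 (s * t * t) ⊗ₜ[R] ((h.ρ X (t : R)) • Y)
            + Localization.mk 1 (t * s * s) ⊗ₜ[R] ((h.ρ Y (s : R)) • X)) :=
  stmt2_general k R L h p
end

section
/- Let C and D be cocomplete cocommutative non-counital coalgebras over R whose primitive filtration submodules C_n, D_n are all flat R-modules. If f : C → D is a morphism of non-counital coalgebras whose restriction f|_{C₁} : C₁ → D₁ to the primitive parts is injective, then f is injective. -/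
open scoped TensorProduct

section Iter
variable (R : Type*) [CommRing R] (C : Type*) [AddCommGroup C] [Module R C]

/-- The iterated tensor power `C^{⊗(n+1)}` (so `Tpow R C 0 = C`). -/
noncomputable def Tpow : ℕ → ModuleCat R
  | 0 => ModuleCat.of R C
  | n + 1 => ModuleCat.of R (C ⊗[R] (Tpow n))

/-- The iterated comultiplication `δ^(n) : C → C^{⊗(n+1)}` (so `δ^(0) = id`,
`δ^(1) = δ`); the primitive filtration is `C_n = ker δ^(n)`. -/
noncomputable def Dit (δ : C →ₗ[R] C ⊗[R] C) : (n : ℕ) → C →ₗ[R] Tpow R C n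
  | 0 => LinearMap.id
  | n + 1 => (TensorProduct.map LinearMap.id (Dit δ n)).comp δ

end Iter
/-! The primitive filtration is exhaustive and, by coassociativity, increasing, so `C` and `D`
are flat as unions of chains of flat submodules. If `x ∈ C_{n+1}`, then `δ x` is killed by
`C ⊗ δ^(n)` and, by cocommutativity, by `δ^(n) ⊗ C`; flatness places it in `C_n ⊗ C_n`.
By induction `f` is injective on `C_n`, hence `f ⊗ f` is injective on `C_n ⊗ C_n`, so `f x = 0`
forces `δ x = 0`, i.e. `x ∈ C₁`. -/

open LinearMap TensorProduct

section Flatness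

variable {R M : Type*} [CommRing R] [AddCommGroup M] [Module R M]

theorem exists_mem_range_lTensor_subtype_of_monotone {P : Type*} [AddCommGroup P] [Module R P]
    (N : ℕ → Submodule R M) (hmono : Monotone N) (hcover : ∀ x, ∃ n, x ∈ N n)
    (t : P ⊗[R] M) : ∃ n, t ∈ range (lTensor P (N n).subtype) := by
  induction t using TensorProduct.induction_on with
  | zero => exact ⟨0, zero_mem _⟩
  | tmul p x =>
    obtain ⟨n, hn⟩ := hcover x
    exact ⟨n, p ⊗ₜ ⟨x, hn⟩, rfl⟩
  | add t t' ht ht' =>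
    have range_mono {m n : ℕ} (hmn : m ≤ n) :
        range (lTensor P (N m).subtype) ≤ range (lTensor P (N n).subtype) := by
      rw [← Submodule.subtype_comp_inclusion _ _ (hmono hmn), lTensor_comp]
      exact range_comp_le_range _ _
    obtain ⟨m, hm⟩ := ht
    obtain ⟨n, hn⟩ := ht'
    exact ⟨max m n,
      add_mem (range_mono (le_max_left m n) hm) (range_mono (le_max_right m n) hn)⟩

theorem Module.Flat.of_monotone_of_forall_exists_mem (N : ℕ → Submodule R M)
    (hmono : Monotone N) (hflat : ∀ n, Module.Flat R (N n)) (hcover : ∀ x, ∃ n, x ∈ N n) :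
    Module.Flat R M := by
  refine Module.Flat.iff_rTensor_injective'.mpr fun I ↦ (injective_iff_map_eq_zero _).mpr ?_
  intro t ht
  obtain ⟨n, u, rfl⟩ := exists_mem_range_lTensor_subtype_of_monotone N hmono hcover t
  rw [← comp_apply, rTensor_comp_lTensor] at ht
  have := hflat n
  rw [map_injective_of_flat_flat _ _ I.injective_subtype (N n).injective_subtype
    (ht.trans (map_zero _).symm), map_zero]

theorem Module.Flat.tpow (R C : Type*) [CommRing R] [AddCommGroup C] [Module R C]
    [Module.Flat R C] : ∀ n, Module.Flat R (Tpow R C n)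
  | 0 => ‹Module.Flat R C›
  | n + 1 =>
    have := Module.Flat.tpow R C n
    inferInstanceAs (Module.Flat R (C ⊗[R] Tpow R C n))

theorem mem_range_map_subtype_ker {T : Type*} [AddCommGroup T] [Module R T] (g : M →ₗ[R] T)
    [Module.Flat R M] [Module.Flat R T] [Module.Flat R (ker g)] {t : M ⊗[R] M}
    (hl : lTensor M g t = 0) (hr : rTensor M g t = 0) :
    t ∈ range (map (ker g).subtype (ker g).subtype) := by
  have hexact : Function.Exact (ker g).subtype g := by
    rw [exact_iff, Submodule.range_subtype]
  obtain ⟨s, rfl⟩ := (Module.Flat.lTensor_exact M hexact t).mp hl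
  have hs : rTensor (ker g) g s = 0 := by
    apply Module.Flat.lTensor_preserves_injective_linearMap (M := T) _ (ker g).injective_subtype
    rw [map_zero, ← comp_apply, lTensor_comp_rTensor, ← rTensor_comp_lTensor, comp_apply, hr]
  obtain ⟨u, rfl⟩ := (Module.Flat.rTensor_exact (ker g) hexact s).mp hs
  exact ⟨u, by rw [← lTensor_comp_rTensor, comp_apply]⟩

end Flatness

section PrimitiveFiltration

variable {R C : Type*} [CommRing R] [AddCommGroup C] [Module R C]

def IsCoassociative (δ : C →ₗ[R] C ⊗[R] C) : Prop :=
  ∀ x, TensorProduct.assoc R C C C (map δ LinearMap.id (δ x)) = map LinearMap.id δ (δ x)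

def IsCocommutative (δ : C →ₗ[R] C ⊗[R] C) : Prop :=
  ∀ x, TensorProduct.comm R C C (δ x) = δ x

variable {δ : C →ₗ[R] C ⊗[R] C}

theorem lTensor_comp_comul_comp_comul (ha : IsCoassociative δ) {T : Type*} [AddCommGroup T]
    [Module R T] (φ : C →ₗ[R] T) :
    lTensor C (lTensor C φ ∘ₗ δ) ∘ₗ δ =
      (TensorProduct.assoc R C C T ∘ₗ rTensor T δ) ∘ₗ lTensor C φ ∘ₗ δ := by
  let α := (TensorProduct.assoc R C C C).toLinearMap
  let α' := (TensorProduct.assoc R C C T).toLinearMap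
  have hcoassoc : lTensor C δ ∘ₗ δ = α ∘ₗ rTensor C δ ∘ₗ δ :=
    LinearMap.ext fun x ↦ (ha x).symm
  have hnat : lTensor C (lTensor C φ) ∘ₗ α = α' ∘ₗ lTensor (C ⊗[R] C) φ := by
    have := map_map_comp_assoc_eq (LinearMap.id : C →ₗ[R] C) (LinearMap.id : C →ₗ[R] C) φ
    rwa [map_id] at this
  calc lTensor C (lTensor C φ ∘ₗ δ) ∘ₗ δ
      = lTensor C (lTensor C φ) ∘ₗ α ∘ₗ rTensor C δ ∘ₗ δ := by
        rw [lTensor_comp, comp_assoc, hcoassoc]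
    _ = α' ∘ₗ (lTensor (C ⊗[R] C) φ ∘ₗ rTensor C δ) ∘ₗ δ := by
        rw [← comp_assoc, hnat, comp_assoc, comp_assoc]
    _ = _ := by rw [lTensor_comp_rTensor, ← rTensor_comp_lTensor, comp_assoc, comp_assoc]

theorem monotone_ker_Dit (ha : IsCoassociative δ) : Monotone fun n ↦ ker (Dit R C δ n) := by
  refine monotone_nat_of_le_succ fun n ↦ ?_
  cases n with
  | zero => exact (ker_id (R := R) (M := C)).trans_le bot_le
  | succ n =>
    change ker (lTensor C (Dit R C δ n) ∘ₗ δ) ≤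
      ker (lTensor C (lTensor C (Dit R C δ n) ∘ₗ δ) ∘ₗ δ)
    rw [lTensor_comp_comul_comp_comul ha]
    exact ker_le_ker_comp _ _

theorem ker_Dit_one : ker (Dit R C δ 1) = ker δ := by
  change ker (lTensor C LinearMap.id ∘ₗ δ) = ker δ
  rw [lTensor_id, id_comp]

theorem Module.Flat.of_flat_ker_Dit (ha : IsCoassociative δ)
    (hflat : ∀ n, Module.Flat R (ker (Dit R C δ n)))
    (hcc : ∀ x : C, ∃ n, Dit R C δ n x = 0) :
    Module.Flat R C :=
  .of_monotone_of_forall_exists_mem _ (monotone_ker_Dit ha) hflat hcc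

theorem comul_mem_range_map_subtype_ker_Dit [Module.Flat R C] (hc : IsCocommutative δ)
    {n : ℕ}
    [Module.Flat R (ker (Dit R C δ n))] {x : C} (hx : Dit R C δ (n + 1) x = 0) :
    δ x ∈ range (map (ker (Dit R C δ n)).subtype (ker (Dit R C δ n)).subtype) := by
  have := Module.Flat.tpow R C n
  have hl : lTensor C (Dit R C δ n) (δ x) = 0 := hx
  refine mem_range_map_subtype_ker _ hl ?_
  rw [← hc x, rTensor_comm, hl, map_zero]

theorem eq_zero_of_Dit_eq_zero_of_map_eq_zero {D : Type*} [AddCommGroup D] [Module R D]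
    {δD : D →ₗ[R] D ⊗[R] D} [Module.Flat R C] [Module.Flat R D]
    (hc : IsCocommutative δ) (hflat : ∀ n, Module.Flat R (ker (Dit R C δ n)))
    (f : C →ₗ[R] D) (hf : ∀ x, δD (f x) = TensorProduct.map f f (δ x))
    (hf1 : ∀ x ∈ ker (Dit R C δ 1), f x = 0 → x = 0)
    {n : ℕ} {x : C} (hx : Dit R C δ n x = 0) (hfx : f x = 0) : x = 0 := by
  induction n generalizing x with
  | zero => exact hx
  | succ n ih =>
    let K := ker (Dit R C δ n)
    have : Module.Flat R K := hflat n
    obtain ⟨u, hu⟩ := comul_mem_range_map_subtype_ker_Dit hc hx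
    have hinj : Function.Injective (f ∘ₗ K.subtype) :=
      (injective_iff_map_eq_zero _).mpr fun a ha ↦ Subtype.ext (ih a.2 ha)
    have hu0 : u = 0 := by
      refine map_injective_of_flat_flat _ _ hinj hinj ?_
      rw [map_zero, map_comp, comp_apply, hu, ← hf, hfx, map_zero]
    refine hf1 x ?_ hfx
    rw [ker_Dit_one, mem_ker, ← hu, hu0, map_zero]

end PrimitiveFiltration

theorem stmt14_general (R : Type*) [CommRing R]
    (C D : Type*) [AddCommGroup C] [Module R C] [AddCommGroup D] [Module R D]
    (δC : C →ₗ[R] C ⊗[R] C) (δD : D →ₗ[R] D ⊗[R] D)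
    -- cocommutativity and coassociativity
    (hcC : ∀ x, TensorProduct.comm R C C (δC x) = δC x)
    (haC : ∀ x, TensorProduct.assoc R C C C (TensorProduct.map δC LinearMap.id (δC x)) =
      TensorProduct.map LinearMap.id δC (δC x))
    (haD : ∀ x, TensorProduct.assoc R D D D (TensorProduct.map δD LinearMap.id (δD x)) =
      TensorProduct.map LinearMap.id δD (δD x))
    -- flatness of the primitive filtration submodules
    (hfC : ∀ n, Module.Flat R ↥(LinearMap.ker (Dit R C δC n)))
    (hfD : ∀ n, Module.Flat R ↥(LinearMap.ker (Dit R D δD n)))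
    -- cocompleteness
    (hccC : ∀ x : C, ∃ n, Dit R C δC n x = 0)
    (hccD : ∀ x : D, ∃ n, Dit R D δD n x = 0)
    -- `f` is a morphism of non-counital coalgebras
    (f : C →ₗ[R] D) (hf : ∀ x, δD (f x) = TensorProduct.map f f (δC x))
    -- injective on primitives
    (hf1 : ∀ x ∈ LinearMap.ker (Dit R C δC 1), f x = 0 → x = 0) :
    Function.Injective f := by
  have : Module.Flat R C := .of_flat_ker_Dit haC hfC hccC
  have : Module.Flat R D := .of_flat_ker_Dit haD hfD hccD
  refine (injective_iff_map_eq_zero f).mpr fun x hfx ↦ ?_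
  obtain ⟨n, hn⟩ := hccC x
  exact eq_zero_of_Dit_eq_zero_of_map_eq_zero hcC hfC f hf hf1 hn hfx

/-- Let `C`, `D` be cocomplete cocommutative non-counital coalgebras
over `R` whose primitive filtration submodules are flat. If a morphism of
non-counital coalgebras `f : C → D` is injective on the primitive parts
`C₁ = ker δ_C`, then `f` is injective. -/
theorem stmt14 (k R : Type*) [Field k] [CharZero k] [CommRing R] [Algebra k R]
    (C D : Type*) [AddCommGroup C] [Module R C] [AddCommGroup D] [Module R D]
    (δC : C →ₗ[R] C ⊗[R] C) (δD : D →ₗ[R] D ⊗[R] D)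
    -- cocommutativity and coassociativity
    (hcC : ∀ x, TensorProduct.comm R C C (δC x) = δC x)
    (haC : ∀ x, TensorProduct.assoc R C C C (TensorProduct.map δC LinearMap.id (δC x)) =
      TensorProduct.map LinearMap.id δC (δC x))
    (hcD : ∀ x, TensorProduct.comm R D D (δD x) = δD x)
    (haD : ∀ x, TensorProduct.assoc R D D D (TensorProduct.map δD LinearMap.id (δD x)) =
      TensorProduct.map LinearMap.id δD (δD x))
    -- flatness of the primitive filtration submodules
    (hfC : ∀ n, Module.Flat R ↥(LinearMap.ker (Dit R C δC n)))
    (hfD : ∀ n, Module.Flat R ↥(LinearMap.ker (Dit R D δD n)))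
    -- cocompleteness
    (hccC : ∀ x : C, ∃ n, Dit R C δC n x = 0)
    (hccD : ∀ x : D, ∃ n, Dit R D δD n x = 0)
    -- `f` is a morphism of non-counital coalgebras
    (f : C →ₗ[R] D) (hf : ∀ x, δD (f x) = TensorProduct.map f f (δC x))
    -- injective on primitives
    (hf1 : ∀ x ∈ LinearMap.ker (Dit R C δC 1), f x = 0 → x = 0) :
    Function.Injective f :=
  stmt14_general R C D δC δD hcC haC haD hfC hfD hccC hccD f hf hf1
end
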